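/- arXiv:1201.0555 — 7 statements merged into one kernel-verified Lean document; each statement's English description precedes it below -/
import Mathlib

section
/- Let m = V + W be an extended translation algebra. A pair of linear maps (D_V : V → V, D_W : W → W) defines a degree-0 derivation of m if and only if for all s ∈ W and v ∈ V one has (ᵀD_V v)·s = v·(D_W s) + ᵀD_W (v·s), where ᵀD_V denotes the transpose of D_V with respect to (·,·) and ᵀD_W the transpose of D_W with respect to β. -/
/-- a pair `(DV, DW)` of linear maps defines a degree-0 derivation of the
extended translation algebra `m = V + W` (i.e. `DV [s,t] = [DW s, t] + [s, DW t]`) if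
and only if `(ᵀDV v)·s = v·(DW s) + ᵀDW (v·s)` for all `v ∈ V`, `s ∈ W`, where the
transposes are taken with respect to `B` and `bW` respectively. -/
theorem degree_zero_derivation_iff
    {K : Type*} [Field K]
    {V : Type*} [AddCommGroup V] [Module K V] [FiniteDimensional K V]
    {W : Type*} [AddCommGroup W] [Module K W]
    (B : V →ₗ[K] V →ₗ[K] K)
    (hBsymm : ∀ v u : V, B v u = B u v)
    (hBnd : ∀ v : V, (∀ u : V, B v u = 0) → v = 0)
    (cl : V →ₗ[K] W →ₗ[K] W)
    (hcl : ∀ (v : V) (s : W), cl v (cl v s) = -(B v v) • s)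
    (bW : W →ₗ[K] W →ₗ[K] K)
    (hbWnd : ∀ s : W, (∀ t : W, bW s t = 0) → s = 0)
    (ε : K) (hε : ε = 1 ∨ ε = -1)
    (hbWrefl : ∀ s t : W, bW s t = -(ε * bW t s))
    (hbWcl : ∀ (v : V) (s t : W), bW (cl v s) t = ε * bW s (cl v t))
    (br : W →ₗ[K] W →ₗ[K] V)
    (hbr : ∀ (s t : W) (v : V), B (br s t) v = bW (cl v s) t)
    (DV TDV : V →ₗ[K] V) (DW TDW : W →ₗ[K] W)
    (hTDV : ∀ v u : V, B (TDV v) u = B v (DV u))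
    (hTDW : ∀ s t : W, bW (TDW s) t = bW s (DW t)) :
    (∀ s t : W, DV (br s t) = br (DW s) t + br s (DW t)) ↔
    (∀ (v : V) (s : W), cl (TDV v) s = cl v (DW s) + TDW (cl v s)) := by
  constructor
  · intro h v s
    have key : ∀ t : W, bW (cl (TDV v) s - (cl v (DW s) + TDW (cl v s))) t = 0 := by
      intro t
      have e1 : bW (cl (TDV v) s) t = B v (DV (br s t)) := by
        rw [← hbr, hBsymm, hTDV, hBsymm]
      have e2 : bW (cl v (DW s)) t = B v (br (DW s) t) := by
        rw [← hbr, hBsymm]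
      have e3 : bW (TDW (cl v s)) t = B v (br s (DW t)) := by
        rw [hTDW, ← hbr, hBsymm]
      rw [map_sub, map_add]
      simp only [LinearMap.sub_apply, LinearMap.add_apply]
      rw [e1, e2, e3, h s t, map_add]
      ring
    exact sub_eq_zero.mp (hbWnd _ key)
  · intro h s t
    have key : ∀ u : V, B (DV (br s t) - (br (DW s) t + br s (DW t))) u = 0 := by
      intro u
      have e1 : B (DV (br s t)) u = bW (cl (TDV u) s) t := by
        rw [hBsymm, ← hTDV, hBsymm, hbr]
      rw [map_sub, map_add]
      simp only [LinearMap.sub_apply, LinearMap.add_apply]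
      rw [e1, h u s, map_add]
      simp only [LinearMap.add_apply]
      rw [hbr, hbr, ← hTDW]
      ring
    exact sub_eq_zero.mp (hBnd _ key)
end

section
/- Let m = V + W be an extended translation algebra. For every element A ∈ so(V) of the form represented by (vu - uv) acting via Clifford multiplication on W, and every H ∈ h₀, one has A∘H = H∘A as endomorphisms of W. Consequently [so(V), h₀] = 0. -/
/-- every element `A ∈ so(V)` of the form `vu - uv ∈ Λ²V ⊂ Cl(V)`, acting
on `W` by `s ↦ v·(u·s) - u·(v·s)`, commutes with every `H ∈ h₀`.
Consequently `[so(V), h₀] = 0`. -/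
theorem soV_commutes_with_h0
    {K : Type*} [Field K]
    {V : Type*} [AddCommGroup V] [Module K V] [FiniteDimensional K V]
    {W : Type*} [AddCommGroup W] [Module K W]
    (B : V →ₗ[K] V →ₗ[K] K)
    (hBsymm : ∀ v u : V, B v u = B u v)
    (hBnd : ∀ v : V, (∀ u : V, B v u = 0) → v = 0)
    (cl : V →ₗ[K] W →ₗ[K] W)
    (hcl : ∀ (v : V) (s : W), cl v (cl v s) = -(B v v) • s)
    (bW : W →ₗ[K] W →ₗ[K] K)
    (hbWnd : ∀ s : W, (∀ t : W, bW s t = 0) → s = 0)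
    (ε : K) (hε : ε = 1 ∨ ε = -1)
    (hbWrefl : ∀ s t : W, bW s t = -(ε * bW t s))
    (hbWcl : ∀ (v : V) (s t : W), bW (cl v s) t = ε * bW s (cl v t))
    (H TH : W →ₗ[K] W)
    (hTH : ∀ s t : W, bW (TH s) t = bW s (H t))
    (hH : ∀ (v : V) (s : W), cl v (H s) + TH (cl v s) = 0) :
    ∀ (v u : V) (s : W),
      cl v (cl u (H s)) - cl u (cl v (H s)) = H (cl v (cl u s) - cl u (cl v s)) := by
  -- `cl v ∘ H = - TH ∘ cl v`, two orientations
  have hclH : ∀ (v : V) (x : W), cl v (H x) = -TH (cl v x) := by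
    intro v x
    linear_combination (norm := module) hH v x
  have hTHcl : ∀ (v : V) (x : W), TH (cl v x) = -cl v (H x) := by
    intro v x
    linear_combination (norm := module) hH v x
  -- polarized Clifford relation
  have hanti : ∀ (v u : V) (x : W),
      cl v (cl u x) + cl u (cl v x) = -((B v u + B u v) • x) := by
    intro v u x
    have h := hcl (v + u) x
    simp only [map_add, LinearMap.add_apply] at h
    linear_combination (norm := module) h - hcl v x - hcl u x
  -- K_w (cl w t) = 0 where K_w = cl w ∘ TH + H ∘ cl w
  have hK0 : ∀ (w : V) (t : W), cl w (TH (cl w t)) + H (cl w (cl w t)) = 0 := by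
    intro w t
    have e1 : cl w (TH (cl w t)) = (B w w) • H t := by
      rw [hTHcl w t, map_neg, hcl w (H t)]
      module
    have e2 : H (cl w (cl w t)) = -((B w w) • H t) := by
      rw [hcl w t, map_smul]
      module
    rw [e1, e2]
    module
  -- cl w (K_w t) = 0
  have hclK0 : ∀ (w : V) (t : W), cl w (cl w (TH t)) + cl w (H (cl w t)) = 0 := by
    intro w t
    have e2 : cl w (H (cl w t)) = (B w w) • TH t := by
      rw [hclH w (cl w t), hcl w t, map_smul]
      module
    rw [e2, hcl w (TH t)]
    module
  -- polarizations
  have hKpol : ∀ (v u : V) (t : W),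
      (cl v (TH (cl u t)) + H (cl v (cl u t))) + (cl u (TH (cl v t)) + H (cl u (cl v t))) = 0 := by
    intro v u t
    have h := hK0 (v + u) t
    simp only [map_add, LinearMap.add_apply] at h
    linear_combination (norm := module) h - hK0 v t - hK0 u t
  have hclKpol : ∀ (v u : V) (t : W),
      (cl v (cl u (TH t)) + cl v (H (cl u t))) + (cl u (cl v (TH t)) + cl u (H (cl v t))) = 0 := by
    intro v u t
    have h := hclK0 (v + u) t
    simp only [map_add, LinearMap.add_apply] at h
    linear_combination (norm := module) h - hclK0 v t - hclK0 u t
  -- the key scalar relation:  B(u,u) • K_v + (B(u,v)+B(v,u)) • K_u = 0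
  have hstar : ∀ (u v : V) (t : W),
      (B u u) • (cl v (TH t) + H (cl v t))
        + (B u v + B v u) • (cl u (TH t) + H (cl u t)) = 0 := by
    intro u v t
    have h5 : (cl u (cl v (TH t)) + cl u (H (cl v t)))
        = -((cl v (cl u (TH t)) + cl v (H (cl u t)))) := by
      linear_combination (norm := module) hclKpol v u t
    have h6 := congrArg (cl u) h5
    simp only [map_add, map_neg] at h6
    have g0 : cl u (H (cl u t)) = (B u u) • TH t := by
      linear_combination (norm := module) hclK0 u t - hcl u (TH t)
    have g1 : cl v (cl u (cl u (TH t))) = -((B u u) • cl v (TH t)) := by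
      rw [hcl u (TH t), map_smul]
      module
    have g2 : cl v (cl u (H (cl u t))) = (B u u) • cl v (TH t) := by
      rw [g0, map_smul]
    linear_combination (norm := module) hcl u (cl v (TH t)) + hcl u (H (cl v t)) - h6
      + hanti u v (cl u (TH t)) + hanti u v (H (cl u t)) - g1 - g2
  -- main lemma: K_u (cl v s) = K_v (cl u s)
  have main : ∀ (v u : V) (s : W),
      cl u (TH (cl v s)) + H (cl u (cl v s)) = cl v (TH (cl u s)) + H (cl v (cl u s)) := by
    by_cases hw : ∃ w : V, B w w ≠ 0
    · obtain ⟨w, hw⟩ := hw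
      -- cl w is invertible, and K_w ∘ cl w = 0, so K_w = 0
      have hKw : ∀ x : W, cl w (TH x) + H (cl w x) = 0 := by
        intro x
        have hx : cl w ((-(B w w)⁻¹) • cl w x) = x := by
          rw [map_smul, hcl, smul_smul, neg_mul_neg, inv_mul_cancel₀ hw, one_smul]
        rw [← hx]
        exact hK0 w _
      -- then K_v = 0 for every v by hstar
      have hKall : ∀ (a : V) (x : W), cl a (TH x) + H (cl a x) = 0 := by
        intro a x
        have h := hstar w a x
        rw [hKw x, smul_zero, add_zero] at h
        have h2 := congrArg (fun y => (B w w)⁻¹ • y) h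
        simpa only [smul_smul, inv_mul_cancel₀ hw, one_smul, smul_zero] using h2
      intro v u s
      rw [hKall u (cl v s), hKall v (cl u s)]
    · push_neg at hw
      by_cases h2 : (2 : K) = 0
      · -- characteristic 2: x = -x
        have hx : ∀ x : W, -x = x := by
          intro x
          have h := two_smul K x
          rw [h2, zero_smul] at h
          exact neg_eq_of_add_eq_zero_left h.symm
        intro v u s
        have h := neg_eq_of_add_eq_zero_left (hKpol v u s)
        rw [hx] at h
        exact h
      · -- char ≠ 2 and B(w,w) = 0 for all w forces B = 0, hence V = 0
        have hB0 : ∀ a b : V, B a b = 0 := by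
          intro a b
          have h := hw (a + b)
          simp only [map_add, LinearMap.add_apply] at h
          rw [hw a, hw b, hBsymm b a] at h
          have h3 : (2 : K) * B a b = 0 := by linear_combination h
          exact (mul_eq_zero.mp h3).resolve_left h2
        have hall : ∀ a : V, a = 0 := fun a => hBnd a fun u => hB0 a u
        intro v u s
        rw [hall v, hall u]
  intro v u s
  rw [hclH u s, hclH v s, map_neg, map_neg, map_sub]
  linear_combination (norm := module) main v u s
end

section
/- Let V be a pseudo-Euclidean space of dimension ≥ 3, W a Cl(V)-module with admissible form β of sign ε, and x, y, z ∈ V pairwise orthogonal non-isotropic vectors. Then the bilinear form α on W defined by α(s,t) = β(x·y·z·s, t) is symmetric and nondegenerate, and every D ∈ h₀ satisfies α(Ds,t) + α(s,Dt) = 0, i.e. h₀ ⊆ so(W, α). -/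
/-- for pairwise orthogonal non-isotropic `x, y, z ∈ V` the bilinear form
`α(s,t) = bW(x·y·z·s, t)` on `W` is symmetric and nondegenerate, and every `D ∈ h₀`
(i.e. `v·Ds + ᵀD(v·s) = 0` for all `v,s`, `ᵀD` the `bW`-transpose of `D`) is
`α`-skew, i.e. `h₀ ⊆ so(W,α)`. -/
theorem h0_subset_so_alpha
    {K : Type*} [Field K]
    {V : Type*} [AddCommGroup V] [Module K V] [FiniteDimensional K V]
    {W : Type*} [AddCommGroup W] [Module K W]
    (B : V →ₗ[K] V →ₗ[K] K)
    (hBsymm : ∀ v u : V, B v u = B u v)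
    (hBnd : ∀ v : V, (∀ u : V, B v u = 0) → v = 0)
    (cl : V →ₗ[K] W →ₗ[K] W)
    (hcl : ∀ (v : V) (s : W), cl v (cl v s) = -(B v v) • s)
    (bW : W →ₗ[K] W →ₗ[K] K)
    (hbWnd : ∀ s : W, (∀ t : W, bW s t = 0) → s = 0)
    (ε : K) (hε : ε = 1 ∨ ε = -1)
    (hbWrefl : ∀ s t : W, bW s t = -(ε * bW t s))
    (hbWcl : ∀ (v : V) (s t : W), bW (cl v s) t = ε * bW s (cl v t))
    (x y z : V)
    (hxy : B x y = 0) (hxz : B x z = 0) (hyz : B y z = 0)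
    (hx : B x x ≠ 0) (hy : B y y ≠ 0) (hz : B z z ≠ 0) :
    (∀ s t : W, bW (cl x (cl y (cl z s))) t = bW (cl x (cl y (cl z t))) s) ∧
    (∀ s : W, (∀ t : W, bW (cl x (cl y (cl z s))) t = 0) → s = 0) ∧
    (∀ D TD : W →ₗ[K] W,
      (∀ s t : W, bW (TD s) t = bW s (D t)) →
      (∀ (v : V) (s : W), cl v (D s) + TD (cl v s) = 0) →
      ∀ s t : W, bW (cl x (cl y (cl z (D s)))) t + bW (cl x (cl y (cl z s))) (D t) = 0) := by
  have hε2 : ε * ε = 1 := by rcases hε with h | h <;> rw [h] <;> ring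
  -- anticommutation of Clifford multiplications by orthogonal vectors
  have hac : ∀ u v : V, B u v = 0 → ∀ s : W, cl u (cl v s) = -(cl v (cl u s)) := by
    intro u v huv s
    have hvu : B v u = 0 := (hBsymm v u).trans huv
    have h := hcl (u + v) s
    simp only [map_add, LinearMap.add_apply] at h
    rw [hcl u s, hcl v s, huv, hvu] at h
    linear_combination (norm := module) h
  -- `z·y·x·t = -(x·y·z·t)`
  have hrev : ∀ t : W, cl z (cl y (cl x t)) = -(cl x (cl y (cl z t))) := by
    intro t
    rw [hac z y ((hBsymm z y).trans hyz), hac z x ((hBsymm z x).trans hxz)]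
    simp only [map_neg, neg_neg]
    rw [hac y x ((hBsymm y x).trans hxy)]
  refine ⟨?_, ?_, ?_⟩
  · -- symmetry
    intro s t
    rw [hbWcl x, hbWcl y, hbWcl z, hrev t]
    rw [show bW s (-(cl x (cl y (cl z t)))) = -(bW s (cl x (cl y (cl z t)))) by simp]
    rw [hbWrefl s (cl x (cl y (cl z t)))]
    ring_nf
    rw [show (ε:K) ^ 4 = (ε * ε) * (ε * ε) by ring, hε2]
    ring
  · -- nondegeneracy
    intro s hs
    have h0 : cl x (cl y (cl z s)) = 0 := hbWnd _ hs
    have h1 : cl y (cl z s) = 0 := by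
      have := congrArg (cl x) h0
      rw [hcl x] at this
      simp only [map_zero, neg_smul, neg_eq_zero, smul_eq_zero] at this
      rcases this with h | h
      · exact absurd h hx
      · exact h
    have h2 : cl z s = 0 := by
      have := congrArg (cl y) h1
      rw [hcl y] at this
      simp only [map_zero, neg_smul, neg_eq_zero, smul_eq_zero] at this
      rcases this with h | h
      · exact absurd h hy
      · exact h
    have := congrArg (cl z) h2
    rw [hcl z] at this
    simp only [map_zero, neg_smul, neg_eq_zero, smul_eq_zero] at this
    rcases this with h | h
    · exact absurd h hz
    · exact h
  · -- skewness
    intro D TD hT hD s t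
    have hD' : ∀ (v : V) (w : W), TD (cl v w) = -(cl v (D w)) := by
      intro v w
      have := hD v w
      linear_combination (norm := module) this
    have hD'' : ∀ (v : V) (w : W), cl v (D w) = -(TD (cl v w)) := by
      intro v w
      have := hD v w
      linear_combination (norm := module) this
    -- dual relation: D (y·w) = -(y·(TD w)), via conjugation by x
    have hdual : ∀ w : W, D (cl y w) = -(cl y (TD w)) := by
      intro w
      -- x·(TD (x·u)) = (B x x) • D u
      have hT1 : ∀ u : W, cl x (TD (cl x u)) = (B x x) • D u := by
        intro u
        rw [hD' x u, map_neg, hcl x (D u)]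
        module
      -- x·(D (x·u)) = (B x x) • TD u
      have hT2 : ∀ u : W, cl x (D (cl x u)) = (B x x) • TD u := by
        intro u
        rw [hD'' x (cl x u), hcl x u, neg_smul, map_neg, map_smul, neg_neg]
      have key : (B x x) • D (cl y w) = (B x x) • (-(cl y (TD w))) := by
        calc (B x x) • D (cl y w) = cl x (TD (cl x (cl y w))) := (hT1 (cl y w)).symm
        _ = cl x (TD (-(cl y (cl x w)))) := by rw [hac x y hxy w]
        _ = -(cl x (TD (cl y (cl x w)))) := by rw [map_neg, map_neg]
        _ = -(cl x (-(cl y (D (cl x w))))) := by rw [hD' y (cl x w)]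
        _ = cl x (cl y (D (cl x w))) := by rw [map_neg, neg_neg]
        _ = -(cl y (cl x (D (cl x w)))) := hac x y hxy _
        _ = -(cl y ((B x x) • TD w)) := by rw [hT2 w]
        _ = (B x x) • (-(cl y (TD w))) := by rw [map_smul]; module
      exact smul_right_injective W hx key
    -- now show x·y·z·(D s) + TD(x·y·z·s) = 0
    have hmain : cl x (cl y (cl z (D s))) + TD (cl x (cl y (cl z s))) = 0 := by
      rw [hD' x (cl y (cl z s)), hdual (cl z s), hD'' z s]
      simp only [map_neg, neg_neg]
      module
    have : bW (cl x (cl y (cl z s))) (D t) = bW (TD (cl x (cl y (cl z s)))) t := (hT _ _).symm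
    rw [this, ← LinearMap.add_apply, ← map_add, hmain]
    simp
end

section
/- Let g be the maximal transitive prolongation of an extended translation algebra m = V + W with dim V ≥ 3. For every D ∈ g₁ there exists a unique s ∈ W such that [D, v] = v·s for all v ∈ V. -/
universe u

/-- `(L, g, ιV, ιW)` is a transitive graded (Tanaka) prolongation of the fundamental
graded Lie algebra `m = m₋₂ + m₋₁ = V + W` with bracket `br : W × W → V`:
`g` is a ℤ-gradation of `L` by finite-dimensional subspaces, vanishing in degrees
`< -2`, transitive in non-negative degrees, and `ιV, ιW` identify `V, W` with
`g (-2), g (-1)` compatibly with the bracket. -/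
structure IsGradedProlong (K : Type*) [Field K]
    (V W : Type*) [AddCommGroup V] [Module K V] [AddCommGroup W] [Module K W]
    (L : Type*) [LieRing L] [LieAlgebra K L]
    (br : W →ₗ[K] W →ₗ[K] V)
    (g : ℤ → Submodule K L) (ιV : V →ₗ[K] L) (ιW : W →ₗ[K] L) : Prop where
  bracket_mem : ∀ i j : ℤ, ∀ x ∈ g i, ∀ y ∈ g j, ⁅x, y⁆ ∈ g (i + j)
  low_eq_bot : ∀ i : ℤ, i < -2 → g i = ⊥
  finite_dim : ∀ i : ℤ, FiniteDimensional K (g i)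
  indep : iSupIndep g
  supr_eq_top : ⨆ i, g i = ⊤
  transitive : ∀ p : ℤ, 0 ≤ p → ∀ x ∈ g p, (∀ y ∈ g (-1 : ℤ), ⁅x, y⁆ = 0) → x = 0
  range_iV : LinearMap.range ιV = g (-2 : ℤ)
  range_iW : LinearMap.range ιW = g (-1 : ℤ)
  inj_iV : Function.Injective ιV
  inj_iW : Function.Injective ιW
  bracket_iW : ∀ s t : W, ⁅ιW s, ιW t⁆ = ιV (br s t)

/-- `(L, g, ιV, ιW)` is the *maximal* transitive prolongation of `m = V + W`:
it is a transitive graded prolongation, and every other transitive graded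
prolongation of `m` embeds into it by an injective graded Lie algebra morphism
restricting to the identity on `m`. -/
def IsMaxGradedProlong (K : Type*) [Field K]
    (V W : Type*) [AddCommGroup V] [Module K V] [AddCommGroup W] [Module K W]
    (L : Type*) [LieRing L] [LieAlgebra K L]
    (br : W →ₗ[K] W →ₗ[K] V)
    (g : ℤ → Submodule K L) (ιV : V →ₗ[K] L) (ιW : W →ₗ[K] L) : Prop :=
  IsGradedProlong K V W L br g ιV ιW ∧
  ∀ (L' : Type u) [LieRing L'] [LieAlgebra K L']
    (g' : ℤ → Submodule K L') (ιV' : V →ₗ[K] L') (ιW' : W →ₗ[K] L'),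
    IsGradedProlong K V W L' br g' ιV' ιW' →
    ∃ φ : L' →ₗ⁅K⁆ L, Function.Injective φ ∧
      (∀ i : ℤ, ∀ x ∈ g' i, φ x ∈ g i) ∧
      (∀ v : V, φ (ιV' v) = ιV v) ∧ (∀ s : W, φ (ιW' s) = ιW s)

/-!
Let `A v = ⁅D, v⁆` for `v ∈ V` and, for `s ∈ W`, let `Ψₛ ∈ End W` be the action of `⁅D, s⁆ ∈ g₀`.
Since `⁅W, V⁆ = 0`, the Jacobi identity for `D, s, ⁅t, u⁆` gives
`⁅Ψₛ t, u⁆ + ⁅t, Ψₛ u⁆ = -⁅s, A ⁅t, u⁆⁆`. Pairing with `x ∈ V` and summing over `t = dᵢ`,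
`u = y·bᵢ`, for a basis `(bᵢ)` of `W` with `β`-dual basis `(dᵢ)`, turns this into
`2 tr(y x Ψₛ) = dim W · β(x·s, A y)`. Symmetrising in `x, y` and using the Clifford relation,
`β(s, x·A y + y·A x) = B(x, y) φ(s)`, so `x·A y + y·A x = B(x, y) c` for a fixed `c ∈ W`.
With `σ = -c/2`, `T v = A v - v·σ` satisfies `x·T y + y·T x = 0`; Clifford multiplication by an
anisotropic `x₀` is injective, so `T x₀ = 0` and then `T = 0`. Uniqueness of `σ` is again
injectivity of `x₀·`.
-/

open LinearMap (trace)

section Clifford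

variable {K V W : Type*} [Field K] [AddCommGroup V] [Module K V] [AddCommGroup W] [Module K W]
  {B : V →ₗ[K] V →ₗ[K] K} {cl : V →ₗ[K] W →ₗ[K] W}

theorem clifford_comp_add_comp (hBsymm : ∀ v u : V, B v u = B u v)
    (hcl : ∀ (v : V) (s : W), cl v (cl v s) = -(B v v) • s) (x y : V) :
    cl x ∘ₗ cl y + cl y ∘ₗ cl x = (-(2 * B x y)) • LinearMap.id := by
  ext s
  have h := hcl (x + y) s
  simp only [map_add, LinearMap.add_apply, hcl, hBsymm y x] at h
  simp only [LinearMap.add_apply, LinearMap.comp_apply, LinearMap.smul_apply, LinearMap.id_apply]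
  linear_combination (norm := module) h

theorem clifford_injective (hcl : ∀ (v : V) (s : W), cl v (cl v s) = -(B v v) • s)
    {v : V} (hv : B v v ≠ 0) : Function.Injective (cl v) := by
  refine (injective_iff_map_eq_zero (cl v)).2 fun s hs => ?_
  have h := hcl v s
  rw [hs, map_zero, eq_comm, smul_eq_zero] at h
  exact h.resolve_left (neg_ne_zero.2 hv)

theorem trace_clifford_comp [NeZero (2 : K)] [FiniteDimensional K W]
    (hBsymm : ∀ v u : V, B v u = B u v)
    (hcl : ∀ (v : V) (s : W), cl v (cl v s) = -(B v v) • s) (x y : V) :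
    trace K W (cl x ∘ₗ cl y) = -(Module.finrank K W * B x y) := by
  have h := congrArg (trace K W) (clifford_comp_add_comp hBsymm hcl x y)
  rw [map_add, LinearMap.trace_comp_comm' (cl x) (cl y), map_smul, LinearMap.trace_id,
    smul_eq_mul] at h
  exact mul_left_cancel₀ two_ne_zero (by linear_combination h)

theorem exists_spinor_of_clifford_add_clifford [NeZero (2 : K)] (hBsymm : ∀ v u : V, B v u = B u v)
    (hcl : ∀ (v : V) (s : W), cl v (cl v s) = -(B v v) • s) {A : V →ₗ[K] W} {c : W}
    (hA : ∀ x y, cl x (A y) + cl y (A x) = B x y • c) {x₀ : V} (hx₀ : B x₀ x₀ ≠ 0) :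
    ∃ σ : W, ∀ v, A v = cl v σ := by
  obtain ⟨σ, rfl⟩ : ∃ σ : W, c = (-2 : K) • σ :=
    ⟨(-2 : K)⁻¹ • c, by rw [smul_smul, mul_inv_cancel₀ (neg_ne_zero.2 two_ne_zero), one_smul]⟩
  have hT : ∀ x y, cl x (A y - cl y σ) + cl y (A x - cl x σ) = 0 := fun x y => by
    have h := LinearMap.congr_fun (clifford_comp_add_comp hBsymm hcl x y) σ
    simp only [LinearMap.add_apply, LinearMap.comp_apply, LinearMap.smul_apply,
      LinearMap.id_apply] at h
    rw [map_sub, map_sub]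
    linear_combination (norm := module) hA x y - h
  have hTx₀ : A x₀ - cl x₀ σ = 0 := by
    refine clifford_injective hcl hx₀ (smul_right_injective W (two_ne_zero (α := K)) ?_)
    simpa only [two_smul, map_zero, smul_zero] using hT x₀ x₀
  refine ⟨σ, fun v => sub_eq_zero.1 (clifford_injective hcl hx₀ ?_)⟩
  simpa only [hTx₀, map_zero, add_zero] using hT x₀ v

theorem apply_clifford_right {bW : W →ₗ[K] W →ₗ[K] K} {ε : K} (hε : ε * ε = 1)
    (hbWcl : ∀ (v : V) (s t : W), bW (cl v s) t = ε * bW s (cl v t)) (v : V) (s t : W) :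
    bW s (cl v t) = ε * bW (cl v s) t := by
  rw [hbWcl, ← mul_assoc, hε, one_mul]

end Clifford

namespace LinearMap.BilinForm

variable {K W ι : Type*} [Field K] [AddCommGroup W] [Module K W] [Fintype ι] [DecidableEq ι]
  {bW : LinearMap.BilinForm K W} (hbW : bW.Nondegenerate) (b : Module.Basis ι K W)

theorem sum_dualBasis_map_eq_trace (F : W →ₗ[K] W) :
    ∑ i, bW (bW.dualBasis hbW b i) (F (b i)) = trace K W F := by
  have hcoord : ∀ i, bW (bW.dualBasis hbW b i) = b.coord i := fun i =>
    b.ext fun j => by simp [apply_dualBasis_left, Finsupp.single_apply]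
  simp [LinearMap.trace_eq_matrix_trace K b, Matrix.trace, LinearMap.toMatrix_apply, hcoord]

theorem sum_map_dualBasis_eq_trace (F : W →ₗ[K] W) :
    ∑ i, bW (F (bW.dualBasis hbW b i)) (b i) = trace K W F := by
  simp [LinearMap.trace_eq_matrix_trace K (bW.dualBasis hbW b), Matrix.trace,
    LinearMap.toMatrix_apply]

end LinearMap.BilinForm

section ExtendedTranslation

variable {K V W : Type*} [Field K] [CharZero K] [AddCommGroup V] [Module K V]
  [AddCommGroup W] [Module K W] [FiniteDimensional K W]
  {B : LinearMap.BilinForm K V} {cl : V →ₗ[K] W →ₗ[K] W} {bW : LinearMap.BilinForm K W} {ε : K}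
  {br : W →ₗ[K] W →ₗ[K] V}

open LinearMap.BilinForm in
theorem sum_br_dualBasis_clifford (hBsymm : ∀ v u : V, B v u = B u v)
    (hBnd : ∀ v : V, (∀ u : V, B v u = 0) → v = 0)
    (hcl : ∀ (v : V) (s : W), cl v (cl v s) = -(B v v) • s)
    (hbWcl : ∀ (v : V) (s t : W), bW (cl v s) t = ε * bW s (cl v t))
    (hbr : ∀ (s t : W) (v : V), B (br s t) v = bW (cl v s) t)
    (hbW : bW.Nondegenerate) {ι : Type*} [Fintype ι] [DecidableEq ι] (b : Module.Basis ι K W)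
    (y : V) :
    ∑ i, br (bW.dualBasis hbW b i) (cl y (b i)) = (-(ε * Module.finrank K W)) • y := by
  refine sub_eq_zero.1 (hBnd _ fun z => ?_)
  have hsum : B (∑ i, br (bW.dualBasis hbW b i) (cl y (b i))) z = ε * trace K W (cl z ∘ₗ cl y) := by
    simp only [map_sum, LinearMap.sum_apply, hbr, hbWcl, ← Finset.mul_sum]
    rw [← sum_dualBasis_map_eq_trace hbW b]
    rfl
  rw [map_sub, LinearMap.sub_apply, hsum, trace_clifford_comp hBsymm hcl, map_smul,
    LinearMap.smul_apply, smul_eq_mul, hBsymm y z]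
  ring

open LinearMap.BilinForm in
theorem two_mul_trace_clifford_comp_clifford_comp (hBsymm : ∀ v u : V, B v u = B u v)
    (hBnd : ∀ v : V, (∀ u : V, B v u = 0) → v = 0)
    (hcl : ∀ (v : V) (s : W), cl v (cl v s) = -(B v v) • s) (hε : ε * ε = 1)
    (hbWcl : ∀ (v : V) (s t : W), bW (cl v s) t = ε * bW s (cl v t))
    (hbr : ∀ (s t : W) (v : V), B (br s t) v = bW (cl v s) t) (hbW : bW.Nondegenerate)
    {A : V →ₗ[K] W} {s : W} {Ψ : W →ₗ[K] W}
    (hΨ : ∀ t u, br (Ψ t) u + br t (Ψ u) = -br s (A (br t u))) (x y : V) :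
    2 * trace K W (cl y ∘ₗ cl x ∘ₗ Ψ) = Module.finrank K W * bW (cl x s) (A y) := by
  let b := Module.finBasis K W
  let d := bW.dualBasis hbW b
  have hpair : ∀ t u, bW (cl x (Ψ t)) u + bW (cl x t) (Ψ u) = -bW (cl x s) (A (br t u)) :=
    fun t u => by simpa only [map_add, map_neg, LinearMap.add_apply, LinearMap.neg_apply, hbr]
      using congrArg (B · x) (hΨ t u)
  have hsum := Finset.sum_congr rfl fun i (_ : i ∈ Finset.univ) => hpair (d i) (cl y (b i))
  have hterm₁ : ∑ i, bW (cl x (Ψ (d i))) (cl y (b i)) = ε * trace K W (cl y ∘ₗ cl x ∘ₗ Ψ) := by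
    simp only [apply_clifford_right hε hbWcl y, ← Finset.mul_sum]
    rw [← sum_map_dualBasis_eq_trace hbW b]
    rfl
  have hterm₂ : ∑ i, bW (cl x (d i)) (Ψ (cl y (b i))) = ε * trace K W (cl y ∘ₗ cl x ∘ₗ Ψ) := by
    simp only [hbWcl x, ← Finset.mul_sum]
    rw [← LinearMap.trace_comp_comm' (cl y) (cl x ∘ₗ Ψ), ← sum_dualBasis_map_eq_trace hbW b]
    rfl
  rw [Finset.sum_add_distrib, hterm₁, hterm₂, Finset.sum_neg_distrib, ← map_sum, ← map_sum,
    sum_br_dualBasis_clifford hBsymm hBnd hcl hbWcl hbr hbW b y, map_smul, map_smul,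
    smul_eq_mul] at hsum
  have hε₀ : ε ≠ 0 := left_ne_zero_of_mul_eq_one hε
  apply mul_left_cancel₀ hε₀
  linear_combination hsum

theorem finrank_mul_apply_clifford_add_clifford (hBsymm : ∀ v u : V, B v u = B u v)
    (hBnd : ∀ v : V, (∀ u : V, B v u = 0) → v = 0)
    (hcl : ∀ (v : V) (s : W), cl v (cl v s) = -(B v v) • s) (hε : ε * ε = 1)
    (hbWcl : ∀ (v : V) (s t : W), bW (cl v s) t = ε * bW s (cl v t))
    (hbr : ∀ (s t : W) (v : V), B (br s t) v = bW (cl v s) t) (hbW : bW.Nondegenerate)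
    {A : V →ₗ[K] W} {s : W} {Ψ : W →ₗ[K] W}
    (hΨ : ∀ t u, br (Ψ t) u + br t (Ψ u) = -br s (A (br t u))) (x y : V) :
    Module.finrank K W * bW s (cl x (A y) + cl y (A x)) = -(4 * ε * B x y * trace K W Ψ) := by
  have hxy := two_mul_trace_clifford_comp_clifford_comp hBsymm hBnd hcl hε hbWcl hbr hbW hΨ x y
  have hyx := two_mul_trace_clifford_comp_clifford_comp hBsymm hBnd hcl hε hbWcl hbr hbW hΨ y x
  have hanti := congrArg (fun F => trace K W (F ∘ₗ Ψ)) (clifford_comp_add_comp hBsymm hcl y x)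
  simp only [LinearMap.add_comp, LinearMap.smul_comp, LinearMap.id_comp, LinearMap.comp_assoc,
    map_add, map_smul, smul_eq_mul, hBsymm y x] at hanti
  rw [map_add, apply_clifford_right hε hbWcl, apply_clifford_right hε hbWcl]
  linear_combination -ε * hxy - ε * hyx + 2 * ε * hanti

theorem exists_spinor_of_br_jacobi (hBsymm : ∀ v u : V, B v u = B u v)
    (hBnd : ∀ v : V, (∀ u : V, B v u = 0) → v = 0)
    (hcl : ∀ (v : V) (s : W), cl v (cl v s) = -(B v v) • s) (hε : ε * ε = 1)
    (hbWcl : ∀ (v : V) (s t : W), bW (cl v s) t = ε * bW s (cl v t))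
    (hbr : ∀ (s t : W) (v : V), B (br s t) v = bW (cl v s) t) (hbW : bW.Nondegenerate)
    {x₀ : V} (hx₀ : B x₀ x₀ ≠ 0) (A : V →ₗ[K] W) (Ψ : W → W →ₗ[K] W)
    (hΨ : ∀ s t u, br (Ψ s t) u + br t (Ψ s u) = -br s (A (br t u))) :
    ∃ σ : W, ∀ v, A v = cl v σ := by
  rcases subsingleton_or_nontrivial W with hW | hW
  · exact ⟨0, fun v => Subsingleton.elim _ _⟩
  have hN : (Module.finrank K W : K) ≠ 0 := Nat.cast_ne_zero.2 Module.finrank_pos.ne'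
  set c : W := (B x₀ x₀)⁻¹ • (cl x₀ (A x₀) + cl x₀ (A x₀))
  have hcx₀ : cl x₀ (A x₀) + cl x₀ (A x₀) = B x₀ x₀ • c := by
    rw [smul_smul, mul_inv_cancel₀ hx₀, one_smul]
  refine exists_spinor_of_clifford_add_clifford hBsymm hcl (c := c) (fun x y => ?_) hx₀
  refine sub_eq_zero.1 (hbW.2 _ fun s => ?_)
  have hxy := finrank_mul_apply_clifford_add_clifford hBsymm hBnd hcl hε hbWcl hbr hbW
    (hΨ s) x y
  have hc : Module.finrank K W * bW s c = -(4 * ε * trace K W (Ψ s)) := by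
    have h := finrank_mul_apply_clifford_add_clifford hBsymm hBnd hcl hε hbWcl hbr hbW
      (hΨ s) x₀ x₀
    rw [hcx₀, map_smul, smul_eq_mul] at h
    exact mul_left_cancel₀ hx₀ (by linear_combination h)
  rw [map_sub, map_smul, smul_eq_mul]
  exact mul_left_cancel₀ hN (by linear_combination hxy - B x y * hc)

end ExtendedTranslation

namespace IsGradedProlong

variable {K V W L : Type*} [Field K] [AddCommGroup V] [Module K V] [AddCommGroup W] [Module K W]
  [LieRing L] [LieAlgebra K L] {br : W →ₗ[K] W →ₗ[K] V} {g : ℤ → Submodule K L}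
  {ιV : V →ₗ[K] L} {ιW : W →ₗ[K] L}

theorem lie_mem_of_add_eq (hp : IsGradedProlong K V W L br g ιV ιW) {i j k : ℤ} (hk : i + j = k)
    {x y : L} (hx : x ∈ g i) (hy : y ∈ g j) : ⁅x, y⁆ ∈ g k :=
  hk ▸ hp.bracket_mem i j x hx y hy

theorem iV_mem (hp : IsGradedProlong K V W L br g ιV ιW) (v : V) : ιV v ∈ g (-2) :=
  hp.range_iV ▸ LinearMap.mem_range_self ιV v

theorem iW_mem (hp : IsGradedProlong K V W L br g ιV ιW) (s : W) : ιW s ∈ g (-1) :=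
  hp.range_iW ▸ LinearMap.mem_range_self ιW s

theorem lie_iW_iV (hp : IsGradedProlong K V W L br g ιV ιW) (s : W) (v : V) :
    ⁅ιW s, ιV v⁆ = 0 := by
  simpa [hp.low_eq_bot (-3) (by norm_num)] using
    hp.lie_mem_of_add_eq (k := -3) (by norm_num) (hp.iW_mem s) (hp.iV_mem v)

theorem finiteDimensional_W (hp : IsGradedProlong K V W L br g ιV ιW) : FiniteDimensional K W :=
  haveI := hp.finite_dim (-1)
  Module.Finite.of_injective (ιW.codRestrict _ hp.iW_mem) fun _ _ h =>
    hp.inj_iW (congrArg Subtype.val h)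

theorem exists_retraction_iW (hp : IsGradedProlong K V W L br g ιV ιW) :
    ∃ π : L →ₗ[K] W, ∀ x ∈ g (-1), ιW (π x) = x := by
  obtain ⟨π, hπ⟩ := ιW.exists_leftInverse_of_injective (LinearMap.ker_eq_bot.2 hp.inj_iW)
  refine ⟨π, fun x hx => ?_⟩
  obtain ⟨s, rfl⟩ : x ∈ LinearMap.range ιW := hp.range_iW ▸ hx
  rw [← LinearMap.comp_apply π, hπ, LinearMap.id_apply]

/-- Jacobi identity for `D, s, ⁅t, u⁆`, read in `g₋₂ = V` through a retraction `π` onto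
`g₋₁ = W`. -/
theorem br_jacobi (hp : IsGradedProlong K V W L br g ιV ιW) {D : L} (hD : D ∈ g 1)
    {π : L →ₗ[K] W} (hπ : ∀ x ∈ g (-1), ιW (π x) = x) (s t u : W) :
    br (π ⁅⁅D, ιW s⁆, ιW t⁆) u + br t (π ⁅⁅D, ιW s⁆, ιW u⁆) = -br s (π ⁅D, ιV (br t u)⁆) := by
  have hDs : ⁅D, ιW s⁆ ∈ g 0 := hp.lie_mem_of_add_eq (by norm_num) hD (hp.iW_mem s)
  have hπ₁ : ∀ w, ιW (π ⁅⁅D, ιW s⁆, ιW w⁆) = ⁅⁅D, ιW s⁆, ιW w⁆ := fun w =>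
    hπ _ (hp.lie_mem_of_add_eq (by norm_num) hDs (hp.iW_mem w))
  have hπ₂ : ιW (π ⁅D, ιV (br t u)⁆) = ⁅D, ιV (br t u)⁆ :=
    hπ _ (hp.lie_mem_of_add_eq (by norm_num) hD (hp.iV_mem _))
  apply hp.inj_iV
  rw [map_add, map_neg, ← hp.bracket_iW, ← hp.bracket_iW, ← hp.bracket_iW, hπ₁, hπ₁, hπ₂,
    ← leibniz_lie, hp.bracket_iW, lie_lie, hp.lie_iW_iV, lie_zero, zero_sub]

end IsGradedProlong

theorem g1_determined_by_spinor_general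
    {K : Type*} [Field K] [CharZero K]
    {V : Type*} [AddCommGroup V] [Module K V]
    {W : Type*} [AddCommGroup W] [Module K W]
    {L : Type*} [LieRing L] [LieAlgebra K L]
    (hdim : 3 ≤ Module.finrank K V)
    (B : V →ₗ[K] V →ₗ[K] K)
    (hBsymm : ∀ v u : V, B v u = B u v)
    (hBnd : ∀ v : V, (∀ u : V, B v u = 0) → v = 0)
    (cl : V →ₗ[K] W →ₗ[K] W)
    (hcl : ∀ (v : V) (s : W), cl v (cl v s) = -(B v v) • s)
    (bW : W →ₗ[K] W →ₗ[K] K)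
    (hbWnd : ∀ s : W, (∀ t : W, bW s t = 0) → s = 0)
    (ε : K) (hε : ε = 1 ∨ ε = -1)
    (hbWrefl : ∀ s t : W, bW s t = -(ε * bW t s))
    (hbWcl : ∀ (v : V) (s t : W), bW (cl v s) t = ε * bW s (cl v t))
    (br : W →ₗ[K] W →ₗ[K] V)
    (hbr : ∀ (s t : W) (v : V), B (br s t) v = bW (cl v s) t)
    (g : ℤ → Submodule K L) (ιV : V →ₗ[K] L) (ιW : W →ₗ[K] L)
    (hmax : IsMaxGradedProlong K V W L br g ιV ιW)
    : ∀ D ∈ g (1 : ℤ), ∃! s : W, ∀ v : V, ⁅D, ιV v⁆ = ιW (cl v s) := by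
  intro D hD
  have hp := hmax.1
  have := hp.finiteDimensional_W
  have hε2 : ε * ε = 1 := by rcases hε with rfl | rfl <;> norm_num
  have hbW : LinearMap.BilinForm.Nondegenerate bW :=
    ⟨hbWnd, fun t ht => hbWnd t fun s => by rw [hbWrefl, ht, mul_zero, neg_zero]⟩
  have : Nontrivial V := Module.nontrivial_of_finrank_pos (R := K) (by omega)
  obtain ⟨v, hv⟩ := exists_ne (0 : V)
  obtain ⟨x₀, hx₀⟩ := LinearMap.BilinForm.exists_bilinForm_self_ne_zero
    (fun h => hv (hBnd v (by simp [h]))) ⟨hBsymm⟩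
  obtain ⟨π, hπ⟩ := hp.exists_retraction_iW
  have hA : ∀ v, ιW (π ⁅D, ιV v⁆) = ⁅D, ιV v⁆ := fun v =>
    hπ _ (hp.lie_mem_of_add_eq (by norm_num) hD (hp.iV_mem v))
  obtain ⟨σ, hσ⟩ := exists_spinor_of_br_jacobi hBsymm hBnd hcl hε2 hbWcl hbr hbW hx₀
    (π ∘ₗ LieAlgebra.ad K L D ∘ₗ ιV) (fun s => π ∘ₗ LieAlgebra.ad K L ⁅D, ιW s⁆ ∘ₗ ιW)
    (hp.br_jacobi hD hπ)
  have hDv : ∀ v, ⁅D, ιV v⁆ = ιW (cl v σ) := fun v => by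
    rw [← hA, ← hσ]
    rfl
  refine ⟨σ, hDv, fun τ hτ => clifford_injective hcl hx₀ (hp.inj_iW ?_)⟩
  rw [← hτ, hDv]

/-- in the maximal transitive prolongation `g` of an extended
translation algebra `m = V + W` with `dim V ≥ 3`, every `D ∈ g₁` determines a
unique spinor `s ∈ W` with `⁅D, v⁆ = v·s` for all `v ∈ V`. -/
theorem g1_determined_by_spinor
    {K : Type*} [Field K] [CharZero K]
    {V : Type*} [AddCommGroup V] [Module K V] [FiniteDimensional K V]
    {W : Type*} [AddCommGroup W] [Module K W]
    {L : Type*} [LieRing L] [LieAlgebra K L]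
    (hdim : 3 ≤ Module.finrank K V)
    (B : V →ₗ[K] V →ₗ[K] K)
    (hBsymm : ∀ v u : V, B v u = B u v)
    (hBnd : ∀ v : V, (∀ u : V, B v u = 0) → v = 0)
    (cl : V →ₗ[K] W →ₗ[K] W)
    (hcl : ∀ (v : V) (s : W), cl v (cl v s) = -(B v v) • s)
    (bW : W →ₗ[K] W →ₗ[K] K)
    (hbWnd : ∀ s : W, (∀ t : W, bW s t = 0) → s = 0)
    (ε : K) (hε : ε = 1 ∨ ε = -1)
    (hbWrefl : ∀ s t : W, bW s t = -(ε * bW t s))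
    (hbWcl : ∀ (v : V) (s t : W), bW (cl v s) t = ε * bW s (cl v t))
    (br : W →ₗ[K] W →ₗ[K] V)
    (hbr : ∀ (s t : W) (v : V), B (br s t) v = bW (cl v s) t)
    (g : ℤ → Submodule K L) (ιV : V →ₗ[K] L) (ιW : W →ₗ[K] L)
    (hmax : IsMaxGradedProlong K V W L br g ιV ιW)
    : ∀ D ∈ g (1 : ℤ), ∃! s : W, ∀ v : V, ⁅D, ιV v⁆ = ιW (cl v s) :=
  g1_determined_by_spinor_general hdim B hBsymm hBnd cl hcl bW hbWnd ε hε hbWrefl hbWcl br hbr g ιV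
    ιW hmax
end

section
/- Let g be the maximal transitive prolongation of an extended translation algebra m = V + W with dim V ≥ 3. For every non-isotropic v ∈ V, the map ψ defined on m by ψ(s) = v·s for s ∈ W and ψ(u) = ε(v,v)(u - 2(v,u)/(v,v) v) for u ∈ V is a degree-0 automorphism of the graded Lie algebra m. -/
/-! Clifford multiplication by a non-isotropic `v` squares to the nonzero scalar `-(v,v)`, and the
scaled reflection `ψ` squares to `(ε (v,v))²`, so both are invertible. For the bracket, polarizing the
Clifford relation gives `v·u·v·s = (v,v) u·s - 2(v,u) v·s`; moving one factor `v` across `β` (at the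
cost of `ε`, with `ε² = 1`) turns `([v·s, v·t], u) = β(u·v·s, v·t)` into `(ψ[s,t], u)`, and the form
on `V` is nondegenerate. -/

theorem LinearMap.bijective_of_apply_apply_eq_smul {K M : Type*} [DivisionRing K]
    [AddCommGroup M] [Module K M] (f : M →ₗ[K] M) {c : K} (hc : c ≠ 0)
    (h : ∀ x, f (f x) = c • x) : Function.Bijective f := by
  refine Function.bijective_iff_has_inverse.mpr ⟨fun x => c⁻¹ • f x, fun x => ?_, fun x => ?_⟩
  · simp only [h, smul_smul, inv_mul_cancel₀ hc, one_smul]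
  · simp only [map_smul, h, smul_smul, inv_mul_cancel₀ hc, one_smul]

section CliffordModule

variable {K V W : Type*} [Field K] [AddCommGroup V] [Module K V] [AddCommGroup W] [Module K W]
  (B : V →ₗ[K] V →ₗ[K] K) (cl : V →ₗ[K] W →ₗ[K] W)

/-- The map `ψ` on `V`: `ε (v,v)` times the reflection of `u` in the hyperplane `v^⊥`. -/
def scaledReflection (ε : K) (v : V) : V →ₗ[K] V where
  toFun u := (ε * B v v) • u - (2 * (ε * B v u)) • v
  map_add' u w := by simp only [map_add]; module
  map_smul' c u := by simp only [map_smul, smul_eq_mul, RingHom.id_apply]; module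

theorem scaledReflection_apply_apply (ε : K) (v u : V) :
    scaledReflection B ε v (scaledReflection B ε v u) = (ε * B v v) ^ 2 • u := by
  simp only [scaledReflection, LinearMap.coe_mk, AddHom.coe_mk, map_sub, map_smul]
  module

variable {B cl}

theorem cl_apply_add_cl_apply (hBsymm : ∀ v u : V, B v u = B u v)
    (hcl : ∀ (v : V) (s : W), cl v (cl v s) = -(B v v) • s) (u w : V) (s : W) :
    cl u (cl w s) + cl w (cl u s) = -(2 * B u w) • s := by
  have h := hcl (u + w) s
  simp only [map_add, LinearMap.add_apply, hcl, hBsymm w u] at h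
  linear_combination (norm := module) h

theorem cl_cl_cl_self (hBsymm : ∀ v u : V, B v u = B u v)
    (hcl : ∀ (v : V) (s : W), cl v (cl v s) = -(B v v) • s) (v u : V) (s : W) :
    cl v (cl u (cl v s)) = B v v • cl u s - (2 * B v u) • cl v s := by
  have h := cl_apply_add_cl_apply hBsymm hcl u v (cl v s)
  rw [hcl v s, map_smul, hBsymm u v] at h
  linear_combination (norm := module) h

theorem br_cl_cl_eq_scaledReflection (hBsymm : ∀ v u : V, B v u = B u v)
    (hBnd : ∀ v : V, (∀ u : V, B v u = 0) → v = 0)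
    (hcl : ∀ (v : V) (s : W), cl v (cl v s) = -(B v v) • s)
    {bW : W →ₗ[K] W →ₗ[K] K} {ε : K} (hε : ε * ε = 1)
    (hbWcl : ∀ (v : V) (s t : W), bW (cl v s) t = ε * bW s (cl v t))
    {br : W →ₗ[K] W →ₗ[K] V} (hbr : ∀ (s t : W) (v : V), B (br s t) v = bW (cl v s) t)
    (v : V) (s t : W) :
    br (cl v s) (cl v t) = scaledReflection B ε v (br s t) := by
  have hbW_right (x : W) : bW x (cl v t) = ε * bW (cl v x) t := by
    rw [hbWcl, ← mul_assoc, hε, one_mul]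
  refine sub_eq_zero.mp (hBnd _ fun u => ?_)
  have hconj := congrArg (bW · t) (cl_cl_cl_self hBsymm hcl v u s)
  simp only [map_sub, map_smul, LinearMap.sub_apply, LinearMap.smul_apply, smul_eq_mul] at hconj
  simp only [scaledReflection, LinearMap.coe_mk, AddHom.coe_mk, map_sub, map_smul,
    LinearMap.sub_apply, LinearMap.smul_apply, smul_eq_mul]
  rw [hbr, hbW_right, hconj, ← hbr, ← hbr, hBsymm v (br s t), hBsymm v u]
  ring

end CliffordModule

theorem psi_is_automorphism_general
    {K : Type*} [Field K]
    {V : Type*} [AddCommGroup V] [Module K V]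
    {W : Type*} [AddCommGroup W] [Module K W]
    (B : V →ₗ[K] V →ₗ[K] K)
    (hBsymm : ∀ v u : V, B v u = B u v)
    (hBnd : ∀ v : V, (∀ u : V, B v u = 0) → v = 0)
    (cl : V →ₗ[K] W →ₗ[K] W)
    (hcl : ∀ (v : V) (s : W), cl v (cl v s) = -(B v v) • s)
    (bW : W →ₗ[K] W →ₗ[K] K)
    (ε : K) (hε : ε = 1 ∨ ε = -1)
    (hbWcl : ∀ (v : V) (s t : W), bW (cl v s) t = ε * bW s (cl v t))
    (br : W →ₗ[K] W →ₗ[K] V)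
    (hbr : ∀ (s t : W) (v : V), B (br s t) v = bW (cl v s) t)
    (v : V) (hv : B v v ≠ 0) :
    Function.Bijective (fun s : W => cl v s) ∧
    Function.Bijective (fun u : V => (ε * B v v) • u - (2 * (ε * B v u)) • v) ∧
    (∀ s t : W, br (cl v s) (cl v t) =
      (ε * B v v) • br s t - (2 * (ε * B v (br s t))) • v) := by
  have hε2 : ε * ε = 1 := by rcases hε with rfl | rfl <;> norm_num
  have hεv : ε * B v v ≠ 0 := mul_ne_zero (left_ne_zero_of_mul_eq_one hε2) hv
  exact ⟨(cl v).bijective_of_apply_apply_eq_smul (neg_ne_zero.mpr hv) (hcl v),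
    (scaledReflection B ε v).bijective_of_apply_apply_eq_smul (pow_ne_zero 2 hεv)
      (scaledReflection_apply_apply B ε v),
    br_cl_cl_eq_scaledReflection hBsymm hBnd hcl hε2 hbWcl hbr v⟩

/-- for any non-isotropic `v ∈ V`, the map `ψ` defined by `ψ(s) = v·s`
on `W` and `ψ(u) = ε (v,v) (u - (2(v,u)/(v,v)) v)` on `V` is a degree-0 automorphism of
the graded Lie algebra `m = V + W`: it is bijective on each graded component and
preserves the bracket `[s,t] = br s t`. -/
theorem psi_is_automorphism
    {K : Type*} [Field K]
    {V : Type*} [AddCommGroup V] [Module K V] [FiniteDimensional K V]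
    {W : Type*} [AddCommGroup W] [Module K W]
    (B : V →ₗ[K] V →ₗ[K] K)
    (hBsymm : ∀ v u : V, B v u = B u v)
    (hBnd : ∀ v : V, (∀ u : V, B v u = 0) → v = 0)
    (cl : V →ₗ[K] W →ₗ[K] W)
    (hcl : ∀ (v : V) (s : W), cl v (cl v s) = -(B v v) • s)
    (bW : W →ₗ[K] W →ₗ[K] K)
    (hbWnd : ∀ s : W, (∀ t : W, bW s t = 0) → s = 0)
    (ε : K) (hε : ε = 1 ∨ ε = -1)
    (hbWrefl : ∀ s t : W, bW s t = -(ε * bW t s))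
    (hbWcl : ∀ (v : V) (s t : W), bW (cl v s) t = ε * bW s (cl v t))
    (br : W →ₗ[K] W →ₗ[K] V)
    (hbr : ∀ (s t : W) (v : V), B (br s t) v = bW (cl v s) t)
    (v : V) (hv : B v v ≠ 0) :
    Function.Bijective (fun s : W => cl v s) ∧
    Function.Bijective (fun u : V => (ε * B v v) • u - (2 * (ε * B v u)) • v) ∧
    (∀ s t : W, br (cl v s) (cl v t) =
      (ε * B v v) • br s t - (2 * (ε * B v (br s t))) • v) :=
  psi_is_automorphism_general B hBsymm hBnd cl hcl bW ε hε hbWcl br hbr v hv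
end

section
/- Let g be the maximal transitive prolongation of an extended translation algebra m = V + W with dim V ≥ 3, φ : g₁ → W the canonical embedding, and ψ the automorphism of g extending the map ψ(s) = v·s, ψ(u) = ε(v,v)(u - 2(v,u)/(v,v)v) for a non-isotropic v ∈ V. Then φ(ψ⁻¹(D)) = ε v·φ(D) for all D ∈ g₁. Consequently the image φ(g₁) is a Cl(V)-submodule of W. -/
universe u

/-- for a non-isotropic `v ∈ V` let `Ψ` be the automorphism of the
maximal transitive prolongation `g` extending `ψ(s) = v·s`,
`ψ(u) = ε(v,v)(u - 2(v,u)/(v,v) v)`.  Then `φ(Ψ⁻¹ D) = ε v·φ(D)` for all `D ∈ g₁`;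
consequently (assuming such extensions exist for all non-isotropic `v`) the image
`φ(g₁) ⊆ W` is a `Cl(V)`-submodule. -/
theorem phi_image_clifford_submodule
    {K : Type*} [Field K] [CharZero K]
    {V : Type*} [AddCommGroup V] [Module K V] [FiniteDimensional K V]
    {W : Type*} [AddCommGroup W] [Module K W]
    {L : Type*} [LieRing L] [LieAlgebra K L]
    (hdim : 3 ≤ Module.finrank K V)
    (B : V →ₗ[K] V →ₗ[K] K)
    (hBsymm : ∀ v u : V, B v u = B u v)
    (hBnd : ∀ v : V, (∀ u : V, B v u = 0) → v = 0)
    (cl : V →ₗ[K] W →ₗ[K] W)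
    (hcl : ∀ (v : V) (s : W), cl v (cl v s) = -(B v v) • s)
    (bW : W →ₗ[K] W →ₗ[K] K)
    (hbWnd : ∀ s : W, (∀ t : W, bW s t = 0) → s = 0)
    (ε : K) (hε : ε = 1 ∨ ε = -1)
    (hbWrefl : ∀ s t : W, bW s t = -(ε * bW t s))
    (hbWcl : ∀ (v : V) (s t : W), bW (cl v s) t = ε * bW s (cl v t))
    (br : W →ₗ[K] W →ₗ[K] V)
    (hbr : ∀ (s t : W) (v : V), B (br s t) v = bW (cl v s) t)
    (g : ℤ → Submodule K L) (ιV : V →ₗ[K] L) (ιW : W →ₗ[K] L)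
    (hmax : IsMaxGradedProlong K V W L br g ιV ιW)
    (φ : g (1 : ℤ) →ₗ[K] W)
    (hφ : ∀ (D : g (1 : ℤ)) (v : V), ⁅(D : L), ιV v⁆ = ιW (cl v (φ D))) :
    (∀ v : V, B v v ≠ 0 → ∀ Ψ : L ≃ₗ⁅K⁆ L,
      (∀ s : W, Ψ (ιW s) = ιW (cl v s)) →
      (∀ u : V, Ψ (ιV u) = ιV ((ε * B v v) • u - (2 * (ε * B v u)) • v)) →
      (∀ i : ℤ, ∀ x ∈ g i, Ψ x ∈ g i ∧ Ψ.symm x ∈ g i) →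
      ∀ (D : g (1 : ℤ)) (hmem : Ψ.symm (D : L) ∈ g (1 : ℤ)),
        φ ⟨Ψ.symm (D : L), hmem⟩ = ε • cl v (φ D)) ∧
    ((∀ v : V, B v v ≠ 0 → ∃ Ψ : L ≃ₗ⁅K⁆ L,
        (∀ s : W, Ψ (ιW s) = ιW (cl v s)) ∧
        (∀ u : V, Ψ (ιV u) = ιV ((ε * B v v) • u - (2 * (ε * B v u)) • v)) ∧
        (∀ i : ℤ, ∀ x ∈ g i, Ψ x ∈ g i ∧ Ψ.symm x ∈ g i)) →
      ∀ (u : V) (D : g (1 : ℤ)), ∃ D' : g (1 : ℤ), φ D' = cl u (φ D)) := by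

  classical
  have hε2 : ε * ε = 1 := by rcases hε with h | h <;> simp [h]
  have main : ∀ v : V, B v v ≠ 0 → ∀ Ψ : L ≃ₗ⁅K⁆ L,
      (∀ s : W, Ψ (ιW s) = ιW (cl v s)) →
      (∀ u : V, Ψ (ιV u) = ιV ((ε * B v v) • u - (2 * (ε * B v u)) • v)) →
      (∀ i : ℤ, ∀ x ∈ g i, Ψ x ∈ g i ∧ Ψ.symm x ∈ g i) →
      ∀ (D : g (1 : ℤ)) (hmem : Ψ.symm (D : L) ∈ g (1 : ℤ)),
        φ ⟨Ψ.symm (D : L), hmem⟩ = ε • cl v (φ D) := by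
    intro v hv Ψ hΨW hΨV _ D hmem
    set E : g (1:ℤ) := ⟨Ψ.symm (D:L), hmem⟩ with hE
    have hΨE : Ψ (E : L) = (D : L) := Ψ.apply_symm_apply _
    have hVv : Ψ (ιV v) = ιV ((-(ε * B v v)) • v) := by
      rw [hΨV v]
      congr 1
      module
    have key : ιW ((-(B v v)) • φ E) = ιW ((-(ε * B v v)) • cl v (φ D)) := by
      calc ιW ((-(B v v)) • φ E) = ιW (cl v (cl v (φ E))) := by rw [hcl]
        _ = Ψ (ιW (cl v (φ E))) := (hΨW _).symm
        _ = Ψ ⁅(E : L), ιV v⁆ := by rw [hφ E v]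
        _ = ⁅Ψ (E : L), Ψ (ιV v)⁆ := Ψ.toLieHom.map_lie _ _
        _ = ⁅(D : L), ιV ((-(ε * B v v)) • v)⁆ := by rw [hΨE, hVv]
        _ = (-(ε * B v v)) • ⁅(D : L), ιV v⁆ := by rw [map_smul, lie_smul]
        _ = (-(ε * B v v)) • ιW (cl v (φ D)) := by rw [hφ D v]
        _ = ιW ((-(ε * B v v)) • cl v (φ D)) := by rw [map_smul]
    have key2 : (-(B v v)) • φ E = (-(ε * B v v)) • cl v (φ D) :=
      hmax.1.inj_iW key
    have key3 : (-(B v v)) • φ E = (-(B v v)) • (ε • cl v (φ D)) := by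
      rw [key2, smul_smul]; ring_nf
    exact smul_right_injective W (neg_ne_zero.mpr hv) key3
  refine ⟨main, ?_⟩
  intro hex u D
  -- nonisotropic case
  have key : ∀ u : V, B u u ≠ 0 → ∀ D : g (1:ℤ),
      ∃ D' : g (1:ℤ), φ D' = cl u (φ D) := by
    intro u hu D
    obtain ⟨Ψ, hW, hV, hg⟩ := hex u hu
    have hmem : Ψ.symm (D : L) ∈ g (1:ℤ) := (hg 1 (D : L) D.2).2
    refine ⟨ε • ⟨Ψ.symm (D : L), hmem⟩, ?_⟩
    rw [map_smul, main u hu Ψ hW hV hg D hmem, smul_smul, hε2, one_smul]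
  -- closure of the "good" set under linear operations
  have hadd : ∀ u₁ u₂ : V,
      (∃ D' : g (1:ℤ), φ D' = cl u₁ (φ D)) →
      (∃ D' : g (1:ℤ), φ D' = cl u₂ (φ D)) →
      ∃ D' : g (1:ℤ), φ D' = cl (u₁ + u₂) (φ D) := by
    rintro u₁ u₂ ⟨D₁, h₁⟩ ⟨D₂, h₂⟩
    exact ⟨D₁ + D₂, by rw [map_add, h₁, h₂, map_add, LinearMap.add_apply]⟩
  have hsmul : ∀ (c : K) (u : V),
      (∃ D' : g (1:ℤ), φ D' = cl u (φ D)) →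
      ∃ D' : g (1:ℤ), φ D' = cl (c • u) (φ D) := by
    rintro c u ⟨D₁, h₁⟩
    exact ⟨c • D₁, by rw [map_smul, h₁, map_smul, LinearMap.smul_apply]⟩
  by_cases hu : B u u ≠ 0
  · exact key u hu D
  push_neg at hu
  by_cases hu0 : u = 0
  · exact ⟨0, by simp [hu0]⟩
  have hw : ∃ w : V, B u w ≠ 0 := by
    by_contra h
    push_neg at h
    exact hu0 (hBnd u h)
  obtain ⟨w, hw⟩ := hw
  by_cases hww : B w w = 0
  · -- use u = (1/2)•(u+w) + (1/2)•(u-w)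
    have h1 : B (u + w) (u + w) ≠ 0 := by
      have : B (u + w) (u + w) = 2 * B u w := by
        simp only [map_add, LinearMap.add_apply]
        rw [hu, hww, hBsymm w u]; ring
      rw [this]
      exact mul_ne_zero two_ne_zero hw
    have h2 : B (u - w) (u - w) ≠ 0 := by
      have : B (u - w) (u - w) = -(2 * B u w) := by
        simp only [map_sub, LinearMap.sub_apply]
        rw [hu, hww, hBsymm w u]; ring
      rw [this]
      exact neg_ne_zero.mpr (mul_ne_zero two_ne_zero hw)
    have hdec : u = ((2:K)⁻¹) • (u + w) + ((2:K)⁻¹) • (u - w) := by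
      rw [← smul_add]
      have : (u + w) + (u - w) = (2:K) • u := by
        rw [two_smul]; abel
      rw [this, smul_smul, inv_mul_cancel₀ (two_ne_zero), one_smul]
    rw [hdec]
    exact hadd _ _ (hsmul _ _ (key _ h1 D)) (hsmul _ _ (key _ h2 D))
  · -- B w w ≠ 0 : use u = (u + t•w) - t•w with suitable t
    set t : K := if 2 * B u w + B w w = 0 then 2 else 1 with ht
    have ht0 : t ≠ 0 := by
      rw [ht]; split <;> norm_num
    have ht1 : 2 * B u w + t * B w w ≠ 0 := by
      rw [ht]
      split
      · rename_i h
        have : 2 * B u w + 2 * B w w = B w w := by linear_combination h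
        rw [this]; exact hww
      · rename_i h
        simpa using h
    have h1 : B (u + t • w) (u + t • w) ≠ 0 := by
      have : B (u + t • w) (u + t • w) = t * (2 * B u w + t * B w w) := by
        simp only [map_add, map_smul, LinearMap.add_apply, LinearMap.smul_apply,
          smul_eq_mul]
        rw [hu, hBsymm w u]; ring
      rw [this]
      exact mul_ne_zero ht0 ht1
    have h2 : B (t • w) (t • w) ≠ 0 := by
      have : B (t • w) (t • w) = t * t * B w w := by
        simp only [map_smul, LinearMap.smul_apply, smul_eq_mul]; ring
      rw [this]
      exact mul_ne_zero (mul_ne_zero ht0 ht0) hww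
    have hdec : u = (u + t • w) - t • w := by abel
    rw [hdec]
    rcases key _ h1 D with ⟨D₁, hD₁⟩
    rcases key _ h2 D with ⟨D₂, hD₂⟩
    exact ⟨D₁ - D₂, by rw [map_sub, hD₁, hD₂, map_sub, LinearMap.sub_apply]⟩
end

section
/- Let g be a finite-dimensional graded simple Lie algebra of depth 2, g = g₋₂ + g₋₁ + g₀ + g₁ + g₂, with nondegenerate invariant Killing form. If g = g' ⊕ g'' is a direct sum of semisimple ideals with g''₋₂ = 0, and the Killing-form pairing between g_p and g₋p is nondegenerate for each p, then g''₂ = 0, g''₋₁ = g''₁ = 0, and if moreover the gradation is transitive ([X, g₋₁] = 0 for X ∈ g₀ implies X = 0), then g'' = 0. -/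
/-!
Killing-orthogonality of complementary ideals and the pairing of `g p` with `g (-p)` give
`I'' ⊓ g (-p) = 0 → I'' ⊓ g p = 0`, because `g (-p)` then lies in `I'`. Brackets with `g (-1)`
lower the degree inside `I''`, so nondegeneracy of `g₋₁ × g₋₁ → g₋₂` and transitivity give
`I'' ⊓ g (p - 1) = 0 → I'' ⊓ g p = 0` for `p = -1` and `p = 0`. Starting from `I'' ⊓ g₋₂ = 0`
this kills every graded piece of `I''`.
-/

section ModularLattice

variable {ι α : Type*} [CompleteLattice α] [IsModularLattice α] {g : ι → α}

theorem iSupIndep.inf_iSup_eq_of_le (hg : iSupIndep g) {h : ι → α} (hle : ∀ i, h i ≤ g i)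
    (i : ι) : g i ⊓ ⨆ j, h j = h i := by
  have hdisj : (⨆ (j) (_ : j ≠ i), h j) ⊓ g i = ⊥ :=
    ((hg i).mono_right (iSup₂_mono fun j _ => hle j)).symm.eq_bot
  rw [iSup_split_single h i, inf_comm, sup_inf_assoc_of_le _ (hle i), hdisj, sup_bot_eq]

theorem iSupIndep.inf_sup_eq_of_eq_iSup_inf (hg : iSupIndep g) {a b : α}
    (ha : a = ⨆ i, a ⊓ g i) (hb : b = ⨆ i, b ⊓ g i) (i : ι) :
    g i ⊓ (a ⊔ b) = a ⊓ g i ⊔ b ⊓ g i := by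
  conv_lhs => rw [ha, hb, ← iSup_sup_eq]
  exact hg.inf_iSup_eq_of_le (fun j => sup_le inf_le_right inf_le_right) i

theorem iSupIndep.le_of_sup_eq_top_of_inf_eq_bot (hg : iSupIndep g) {a b : α}
    (ha : a = ⨆ i, a ⊓ g i) (hb : b = ⨆ i, b ⊓ g i) (hab : a ⊔ b = ⊤) {i : ι}
    (hbi : b ⊓ g i = ⊥) : g i ≤ a := by
  have := hg.inf_sup_eq_of_eq_iSup_inf ha hb i
  rw [hab, inf_top_eq, hbi, sup_bot_eq] at this
  exact this ▸ inf_le_left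

end ModularLattice

namespace LieIdeal

variable {R L : Type*} [CommRing R] [LieRing L] [LieAlgebra R L]

theorem killingForm_eq_zero_of_disjoint {I J : LieIdeal R L} (hIJ : Disjoint I J) {x y : L}
    (hx : x ∈ I) (hy : y ∈ J) : killingForm R L x y = 0 := by
  have hxy : LieAlgebra.ad R L x ∘ₗ LieAlgebra.ad R L y = 0 := by
    ext z
    have hmem : ⁅x, ⁅y, z⁆⁆ ∈ I ⊓ J :=
      LieSubmodule.lie_le_inf I J (LieSubmodule.lie_mem_lie hx (lie_mem_left R L J _ _ hy))
    rw [hIJ.eq_bot, LieSubmodule.mem_bot] at hmem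
    simpa using hmem
  rw [killingForm_apply_apply, hxy, map_zero]

theorem lie_eq_zero_of_inf_eq_bot {I : LieIdeal R L} {M : Submodule R L}
    (hIM : (I : Submodule R L) ⊓ M = ⊥) {x y : L} (hx : x ∈ I) (hxy : ⁅x, y⁆ ∈ M) :
    ⁅x, y⁆ = 0 :=
  (Submodule.eq_bot_iff _).mp hIM _ ⟨lie_mem_left R L I _ _ hx, hxy⟩

end LieIdeal

theorem summand_vanishes_general
    {K : Type*} [Field K]
    {L : Type*} [LieRing L] [LieAlgebra K L]
    (g : ℤ → Submodule K L)
    (hdepth : ∀ i : ℤ, (i < -2 ∨ 2 < i) → g i = ⊥)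
    (hbracket : ∀ i j : ℤ, ∀ x ∈ g i, ∀ y ∈ g j, ⁅x, y⁆ ∈ g (i + j))
    (hindep : iSupIndep g)
    (hkilling : ∀ p : ℤ, ∀ x ∈ g p,
      (∀ y ∈ g (-p), killingForm K L x y = 0) → x = 0)
    (hlevi : ∀ y ∈ g (-1 : ℤ), (∀ z ∈ g (-1 : ℤ), ⁅y, z⁆ = 0) → y = 0)
    (I' I'' : LieIdeal K L)
    (hsup : (I' : Submodule K L) ⊔ (I'' : Submodule K L) = ⊤)
    (hdisj : (I' : Submodule K L) ⊓ (I'' : Submodule K L) = ⊥)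
    (hgr' : (I' : Submodule K L) = ⨆ p : ℤ, ((I' : Submodule K L) ⊓ g p))
    (hgr'' : (I'' : Submodule K L) = ⨆ p : ℤ, ((I'' : Submodule K L) ⊓ g p))
    (hm2 : (I'' : Submodule K L) ⊓ g (-2 : ℤ) = ⊥) :
    ((I'' : Submodule K L) ⊓ g (2 : ℤ) = ⊥) ∧
    ((I'' : Submodule K L) ⊓ g (-1 : ℤ) = ⊥) ∧
    ((I'' : Submodule K L) ⊓ g (1 : ℤ) = ⊥) ∧
    ((∀ p : ℤ, 0 ≤ p → ∀ x ∈ g p, (∀ y ∈ g (-1 : ℤ), ⁅x, y⁆ = 0) → x = 0) →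
      I'' = ⊥) := by
  have horth : Disjoint I'' I' :=
    (LieSubmodule.disjoint_toSubmodule.mp (disjoint_iff.mpr hdisj)).symm
  have hdual : ∀ p : ℤ, (I'' : Submodule K L) ⊓ g (-p) = ⊥ → (I'' : Submodule K L) ⊓ g p = ⊥ :=
    fun p hp => (Submodule.eq_bot_iff _).mpr fun x ⟨hxI, hx⟩ => hkilling p x hx fun y hy =>
      LieIdeal.killingForm_eq_zero_of_disjoint horth hxI
        (hindep.le_of_sup_eq_top_of_inf_eq_bot hgr' hgr'' hsup hp hy)
  have hlower : ∀ p : ℤ, (I'' : Submodule K L) ⊓ g (p + -1) = ⊥ →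
      ∀ x ∈ (I'' : Submodule K L) ⊓ g p, ∀ y ∈ g (-1 : ℤ), ⁅x, y⁆ = 0 :=
    fun p hp x ⟨hxI, hx⟩ y hy =>
      LieIdeal.lie_eq_zero_of_inf_eq_bot hp hxI (hbracket p (-1) x hx y hy)
  have h2 := hdual 2 hm2
  have hm1 : (I'' : Submodule K L) ⊓ g (-1 : ℤ) = ⊥ :=
    (Submodule.eq_bot_iff _).mpr fun y hy => hlevi y hy.2 <|
      hlower (-1) (by rwa [show (-1 : ℤ) + -1 = -2 by norm_num]) y hy
  have h1 := hdual 1 hm1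
  refine ⟨h2, hm1, h1, fun htrans => ?_⟩
  have h0 : (I'' : Submodule K L) ⊓ g 0 = ⊥ :=
    (Submodule.eq_bot_iff _).mpr fun x hx => htrans 0 le_rfl x hx.2 <|
      hlower 0 (by rwa [zero_add]) x hx
  have hall : ∀ p : ℤ, (I'' : Submodule K L) ⊓ g p = ⊥ := by
    intro p
    by_cases hp : p < -2 ∨ 2 < p
    · rw [hdepth p hp, inf_bot_eq]
    · obtain ⟨hp1, hp2⟩ : -2 ≤ p ∧ p ≤ 2 := by omega
      interval_cases p <;> assumption
  exact (LieSubmodule.toSubmodule_eq_bot I'').mp (hgr''.trans (iSup_eq_bot.mpr hall))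

/-- let `L` be a finite-dimensional graded Lie algebra of depth 2,
`L = g₋₂ + g₋₁ + g₀ + g₁ + g₂`, in which the Killing form pairs `g p` with `g (-p)`
nondegenerately, the bracket `g₋₁ × g₋₁ → g₋₂` is nondegenerate, and suppose
`L = I' ⊕ I''` is a direct sum of graded semisimple ideals with `I'' ⊓ g₋₂ = 0`.
Then `I'' ⊓ g₂ = 0`, `I'' ⊓ g₋₁ = I'' ⊓ g₁ = 0`, and if moreover the gradation is
transitive then `I'' = 0`. -/
theorem summand_vanishes
    {K : Type*} [Field K] [CharZero K]
    {L : Type*} [LieRing L] [LieAlgebra K L] [FiniteDimensional K L]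
    (g : ℤ → Submodule K L)
    (hdepth : ∀ i : ℤ, (i < -2 ∨ 2 < i) → g i = ⊥)
    (hbracket : ∀ i j : ℤ, ∀ x ∈ g i, ∀ y ∈ g j, ⁅x, y⁆ ∈ g (i + j))
    (hindep : iSupIndep g)
    (htop : ⨆ i, g i = ⊤)
    (hkilling : ∀ p : ℤ, ∀ x ∈ g p,
      (∀ y ∈ g (-p), killingForm K L x y = 0) → x = 0)
    (hlevi : ∀ y ∈ g (-1 : ℤ), (∀ z ∈ g (-1 : ℤ), ⁅y, z⁆ = 0) → y = 0)
    (I' I'' : LieIdeal K L)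
    (hsup : (I' : Submodule K L) ⊔ (I'' : Submodule K L) = ⊤)
    (hdisj : (I' : Submodule K L) ⊓ (I'' : Submodule K L) = ⊥)
    (hss' : LieAlgebra.IsSemisimple K I')
    (hss'' : LieAlgebra.IsSemisimple K I'')
    (hgr' : (I' : Submodule K L) = ⨆ p : ℤ, ((I' : Submodule K L) ⊓ g p))
    (hgr'' : (I'' : Submodule K L) = ⨆ p : ℤ, ((I'' : Submodule K L) ⊓ g p))
    (hm2 : (I'' : Submodule K L) ⊓ g (-2 : ℤ) = ⊥) :
    ((I'' : Submodule K L) ⊓ g (2 : ℤ) = ⊥) ∧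
    ((I'' : Submodule K L) ⊓ g (-1 : ℤ) = ⊥) ∧
    ((I'' : Submodule K L) ⊓ g (1 : ℤ) = ⊥) ∧
    ((∀ p : ℤ, 0 ≤ p → ∀ x ∈ g p, (∀ y ∈ g (-1 : ℤ), ⁅x, y⁆ = 0) → x = 0) →
      I'' = ⊥) :=
  summand_vanishes_general g hdepth hbracket hindep hkilling hlevi I' I'' hsup hdisj hgr' hgr'' hm2
end
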